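/- Let n ≥ 1 and s ∈ ℝ. For every C¹ vector field Y on ℝⁿ with compact support contained in the open half-space {x ∈ ℝⁿ : xₙ > 0}, one has ∫ xₙ^{2s} Σᵢ,ⱼ (S(Y)ᵢⱼ + (1/2)(div Y)δᵢⱼ) Yᵢ ((eₙ)ⱼ/xₙ) dx = (1/2)(1/2 − s) ∫ xₙ^{2s−2} ( |Y|² + 2Yₙ² ) dx, where eₙ is the n-th standard basis vector. -/

import Mathlib

/-!
Pointwise, `Σᵢ (S(Y)ᵢₙ + ½ (div Y) δᵢₙ) Yᵢ = Σᵢ ∂ᵢ(½ YᵢYₙ + ¼ δᵢₙ |Y|²)`, so after cancelling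
`1/xₙ` the left side is `∫ xₙ^{2s-1} div F` for a compactly supported `C¹` field `F`. Integrating
by parts moves the derivative onto the weight, and only `∂ₙ xₙ^{2s-1} = (2s-1) xₙ^{2s-2}` survives,
leaving `-(2s-1) ∫ xₙ^{2s-2} Fₙ` with `Fₙ = ¼ (|Y|² + 2Yₙ²)`. The weight is singular at `xₙ = 0`,
but `Y` vanishes near that hyperplane, so only differentiability of the weight on `{xₙ > 0}` is
needed.
-/

open MeasureTheory Real

/-- The `i`-th partial derivative of a function on `ℝⁿ`. -/
noncomputable def pd (n : ℕ) (f : EuclideanSpace ℝ (Fin n) → ℝ)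
    (i : Fin n) (x : EuclideanSpace ℝ (Fin n)) : ℝ :=
  fderiv ℝ f x (EuclideanSpace.single i 1)

/-- The squared Euclidean norm of the gradient, `|∇f|² = Σᵢ (∂ᵢf)²`. -/
noncomputable def gradSq (n : ℕ) (f : EuclideanSpace ℝ (Fin n) → ℝ)
    (x : EuclideanSpace ℝ (Fin n)) : ℝ :=
  ∑ i, (pd n f i x) ^ 2

/-- The Euclidean Laplacian, `Δf = Σᵢ ∂ᵢ²f`. -/
noncomputable def lap (n : ℕ) (f : EuclideanSpace ℝ (Fin n) → ℝ)
    (x : EuclideanSpace ℝ (Fin n)) : ℝ :=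
  ∑ i, pd n (pd n f i) i x

/-- The partial derivative `∂ᵢYⱼ` of a vector field `Y` on `ℝⁿ`. -/
noncomputable def vpd (n : ℕ)
    (Y : EuclideanSpace ℝ (Fin n) → EuclideanSpace ℝ (Fin n))
    (i j : Fin n) (x : EuclideanSpace ℝ (Fin n)) : ℝ :=
  fderiv ℝ (fun y => Y y j) x (EuclideanSpace.single i 1)

/-- The symmetrized gradient `S(Y)ᵢⱼ = (∂ᵢYⱼ + ∂ⱼYᵢ)/2` of a vector field. -/
noncomputable def symGrad (n : ℕ)
    (Y : EuclideanSpace ℝ (Fin n) → EuclideanSpace ℝ (Fin n))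
    (i j : Fin n) (x : EuclideanSpace ℝ (Fin n)) : ℝ :=
  (vpd n Y i j x + vpd n Y j i x) / 2

/-- The divergence `div Y = Σᵢ ∂ᵢYᵢ` of a vector field on `ℝⁿ`. -/
noncomputable def diverg (n : ℕ)
    (Y : EuclideanSpace ℝ (Fin n) → EuclideanSpace ℝ (Fin n))
    (x : EuclideanSpace ℝ (Fin n)) : ℝ :=
  ∑ i, vpd n Y i i x

open Function

section WeightedIntegrationByParts

theorem continuous_mul_of_tsupport_subset {X : Type*} [TopologicalSpace X] {U : Set X}
    {w g : X → ℝ} (hU : IsOpen U) (hw : ContinuousOn w U) (hg : Continuous g)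
    (hgU : tsupport g ⊆ U) : Continuous fun x => w x * g x :=
  continuous_of_tsupport fun _ hx =>
    (hw.continuousAt (hU.mem_nhds (hgU (tsupport_mul_subset_right hx)))).mul hg.continuousAt

theorem integrable_mul_of_tsupport_subset {X : Type*} [TopologicalSpace X] [MeasurableSpace X]
    [OpensMeasurableSpace X] {μ : Measure X} [IsFiniteMeasureOnCompacts μ] {U : Set X}
    {w g : X → ℝ} (hU : IsOpen U) (hw : ContinuousOn w U) (hg : Continuous g)
    (hgc : HasCompactSupport g) (hgU : tsupport g ⊆ U) : Integrable (fun x => w x * g x) μ :=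
  (continuous_mul_of_tsupport_subset hU hw hg hgU).integrable_of_hasCompactSupport hgc.mul_left

variable {E : Type*} [NormedAddCommGroup E] [NormedSpace ℝ E]

theorem contDiffOn_rpow_setOf_pos (ℓ : E →L[ℝ] ℝ) (p : ℝ) {k : WithTop ℕ∞} :
    ContDiffOn ℝ k (fun x => ℓ x ^ p) {x | 0 < ℓ x} := fun _ hx =>
  (ℓ.contDiff.contDiffAt.rpow_const_of_ne (ne_of_gt hx)).contDiffWithinAt

variable [MeasurableSpace E] [BorelSpace E] [FiniteDimensional ℝ E] {μ : Measure E}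
  [μ.IsAddHaarMeasure]

theorem integral_mul_fderiv_eq_neg_fderiv_mul_of_tsupport_subset {U : Set E} {w g : E → ℝ}
    (hU : IsOpen U) (hw : ContDiffOn ℝ 1 w U) (hg : ContDiff ℝ 1 g) (hgc : HasCompactSupport g)
    (hgU : tsupport g ⊆ U) (v : E) :
    ∫ x, w x * fderiv ℝ g x v ∂μ = -∫ x, fderiv ℝ w x v * g x ∂μ :=
  integral_mul_fderiv_eq_neg_fderiv_mul_of_integrable
    (integrable_mul_of_tsupport_subset hU
      ((hw.continuousOn_fderiv_of_isOpen hU le_rfl).clm_apply continuousOn_const)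
      hg.continuous hgc hgU)
    (integrable_mul_of_tsupport_subset hU hw.continuousOn
      ((hg.continuous_fderiv one_ne_zero).clm_apply continuous_const)
      (hgc.fderiv_apply ℝ v) ((tsupport_fderiv_apply_subset ℝ v).trans hgU))
    (integrable_mul_of_tsupport_subset hU hw.continuousOn hg.continuous hgc hgU)
    (fun x hx => (hw.differentiableOn one_ne_zero x (hgU hx)).differentiableAt
      (hU.mem_nhds (hgU hx)))
    (fun _ _ => hg.differentiable one_ne_zero _)

theorem integral_rpow_mul_fderiv (ℓ : E →L[ℝ] ℝ) (p : ℝ) {g : E → ℝ} (hg : ContDiff ℝ 1 g)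
    (hgc : HasCompactSupport g) (hgU : tsupport g ⊆ {x | 0 < ℓ x}) (v : E) :
    ∫ x, ℓ x ^ p * fderiv ℝ g x v ∂μ = -(p * ℓ v) * ∫ x, ℓ x ^ (p - 1) * g x ∂μ := by
  rw [integral_mul_fderiv_eq_neg_fderiv_mul_of_tsupport_subset
    (isOpen_lt continuous_const ℓ.continuous) (contDiffOn_rpow_setOf_pos ℓ p) hg hgc hgU v,
    neg_mul, ← integral_const_mul]
  congr 2 with x
  by_cases hx : x ∈ tsupport g
  · rw [((ℓ.hasFDerivAt (x := x)).rpow_const (Or.inl (hgU hx).ne')).fderiv]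
    simp only [smul_apply, smul_eq_mul]
    ring
  · simp [image_eq_zero_of_notMem_tsupport hx]

theorem integral_rpow_mul_sum_fderiv {ι : Type*} [Fintype ι] (ℓ : E →L[ℝ] ℝ) (p : ℝ)
    {g : ι → E → ℝ} (hg : ∀ i, ContDiff ℝ 1 (g i)) (hgc : ∀ i, HasCompactSupport (g i))
    (hgU : ∀ i, tsupport (g i) ⊆ {x | 0 < ℓ x}) (v : ι → E) :
    ∫ x, ℓ x ^ p * ∑ i, fderiv ℝ (g i) x (v i) ∂μ
      = -p * ∫ x, ℓ x ^ (p - 1) * ∑ i, ℓ (v i) * g i x ∂μ := by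
  have hU : IsOpen {x | 0 < ℓ x} := isOpen_lt continuous_const ℓ.continuous
  have hint_weight : ∀ (q : ℝ) i, Integrable (fun x => ℓ x ^ q * g i x) μ := fun q i =>
    integrable_mul_of_tsupport_subset hU (contDiffOn_rpow_setOf_pos ℓ q (k := 0)).continuousOn
      (hg i).continuous (hgc i) (hgU i)
  have hint_deriv : ∀ i, Integrable (fun x => ℓ x ^ p * fderiv ℝ (g i) x (v i)) μ := fun i =>
    integrable_mul_of_tsupport_subset hU (contDiffOn_rpow_setOf_pos ℓ p (k := 0)).continuousOn
      (((hg i).continuous_fderiv one_ne_zero).clm_apply continuous_const)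
      ((hgc i).fderiv_apply ℝ (v i)) ((tsupport_fderiv_apply_subset ℝ (v i)).trans (hgU i))
  have hsum : ∀ x, ℓ x ^ (p - 1) * ∑ i, ℓ (v i) * g i x
      = ∑ i, ℓ (v i) * (ℓ x ^ (p - 1) * g i x) := fun x => by
    simp only [Finset.mul_sum, mul_left_comm]
  simp only [hsum, Finset.mul_sum]
  rw [integral_finsetSum _ fun i _ => hint_deriv i,
    integral_finsetSum _ fun i _ => (hint_weight (p - 1) i).const_mul _, Finset.mul_sum]
  refine Finset.sum_congr rfl fun i _ => ?_
  rw [integral_rpow_mul_fderiv ℓ p (hg i) (hgc i) (hgU i), integral_const_mul]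
  ring

end WeightedIntegrationByParts

section KillingFlux

variable {n : ℕ} (ν : Fin n) (Y : EuclideanSpace ℝ (Fin n) → EuclideanSpace ℝ (Fin n))

noncomputable def killingFlux (i : Fin n) (x : EuclideanSpace ℝ (Fin n)) : ℝ :=
  Y x i * Y x ν / 2 + (if i = ν then (1 : ℝ) else 0) / 4 * ∑ j, Y x j ^ 2

theorem contDiff_killingFlux (hY : ContDiff ℝ 1 Y) (i : Fin n) :
    ContDiff ℝ 1 (killingFlux ν Y i) := by
  unfold killingFlux
  fun_prop

theorem support_killingFlux_subset (i : Fin n) : support (killingFlux ν Y i) ⊆ support Y := by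
  intro x hx
  contrapose! hx
  simp [killingFlux, notMem_support.mp hx]

theorem sum_fderiv_killingFlux (hY : Differentiable ℝ Y) (x : EuclideanSpace ℝ (Fin n)) :
    ∑ i, fderiv ℝ (killingFlux ν Y i) x (EuclideanSpace.single i 1)
      = ∑ i, (symGrad n Y i ν x + 1 / 2 * diverg n Y x * (if i = ν then (1 : ℝ) else 0)) *
          Y x i := by
  unfold killingFlux
  simp (disch := fun_prop) only [div_eq_mul_inv, fderiv_fun_add, fderiv_mul_const, fderiv_fun_mul,
    fderiv_fun_sum, fderiv_fun_pow, fderiv_fun_const]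
  simp only [add_apply, smul_apply, FunLike.coe_sum, Finset.sum_apply]
  simp only [smul_eq_mul, ite_mul, one_mul, zero_mul, Nat.add_one_sub_one, pow_one, nsmul_eq_mul,
    Nat.cast_ofNat, Finset.mul_sum, Finset.sum_ite_irrel, Finset.sum_const_zero, Pi.zero_apply,
    zero_apply, mul_zero, add_zero, Finset.sum_add_distrib, Finset.sum_ite_eq', Finset.mem_univ,
    if_true, symGrad, vpd, diverg, mul_ite, mul_one, add_mul]
  rw [Finset.sum_mul, ← Finset.sum_add_distrib, ← Finset.sum_add_distrib]
  exact Finset.sum_congr rfl fun i _ => by ring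

theorem sum_proj_single_mul_killingFlux (x : EuclideanSpace ℝ (Fin n)) :
    ∑ i, EuclideanSpace.proj ν (EuclideanSpace.single i 1) * killingFlux ν Y i x
      = ((∑ i, Y x i ^ 2) + 2 * Y x ν ^ 2) / 4 := by
  simp only [PiLp.proj_apply, PiLp.single_apply, ite_mul, one_mul, zero_mul, Finset.sum_ite_eq,
    Finset.mem_univ, if_true, killingFlux]
  ring

end KillingFlux

/-- Flat-case half-space identity for the Killing operator:
`∫ xₙ^{2s} Σᵢⱼ(S(Y)ᵢⱼ + ½(div Y)δᵢⱼ) Yᵢ ((eₙ)ⱼ/xₙ)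
  = ½(½ − s) ∫ xₙ^{2s−2}(|Y|² + 2Yₙ²)`
for `Y` of class `C¹` compactly supported in `{xₙ > 0}`. -/
theorem halfspace_killing_identity (n : ℕ) (hn : 1 ≤ n) (s : ℝ)
    (Y : EuclideanSpace ℝ (Fin n) → EuclideanSpace ℝ (Fin n))
    (hY : ContDiff ℝ 1 Y) (hsupp : HasCompactSupport Y)
    (hpos : tsupport Y ⊆
      {x : EuclideanSpace ℝ (Fin n) | 0 < x ⟨n - 1, by omega⟩}) :
    ∫ x : EuclideanSpace ℝ (Fin n),
        (x (⟨n - 1, by omega⟩ : Fin n)) ^ (2 * s) *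
          ∑ i, ∑ j, (symGrad n Y i j x +
              (1/2) * diverg n Y x * (if i = j then (1:ℝ) else 0)) *
            Y x i *
            ((if j = (⟨n - 1, by omega⟩ : Fin n) then (1:ℝ) else 0) /
              x (⟨n - 1, by omega⟩ : Fin n))
    = (1/2) * (1/2 - s) * ∫ x : EuclideanSpace ℝ (Fin n),
        (x (⟨n - 1, by omega⟩ : Fin n)) ^ (2 * s - 2) *
          ((∑ i, (Y x i) ^ 2) + 2 * (Y x (⟨n - 1, by omega⟩ : Fin n)) ^ 2) := by
  set ν : Fin n := ⟨n - 1, by omega⟩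
  have hflux := integral_rpow_mul_sum_fderiv (μ := volume) (EuclideanSpace.proj ν) (2 * s - 1)
    (contDiff_killingFlux ν Y hY) (fun i => hsupp.mono (support_killingFlux_subset ν Y i))
    (fun i => (closure_mono (support_killingFlux_subset ν Y i)).trans hpos)
    (fun i => EuclideanSpace.single i 1)
  simp only [sum_fderiv_killingFlux ν Y (hY.differentiable one_ne_zero)] at hflux
  convert hflux using 1
  · congr 1 with x
    by_cases hx : x ∈ tsupport Y
    · simp only [mul_div_assoc', mul_ite, mul_one, mul_zero, ite_div, zero_div, Finset.sum_ite_eq',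
        Finset.mem_univ, if_true]
      rw [← Finset.sum_div, PiLp.proj_apply, Real.rpow_sub_one (hpos hx).ne']
      ring
    · simp [image_eq_zero_of_notMem_tsupport hx]
  · simp only [sum_proj_single_mul_killingFlux]
    simp only [PiLp.proj_apply, mul_div_assoc', integral_div, show 2 * s - 1 - 1 = 2 * s - 2 by ring]
    ring
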